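/- Let λ, μ ∈ 𝒫^l_n, let s ∈ Std(λ), and let u be a λ-tableau such that w_u ≤ w_s in the Bruhat order and, for every 1 ≤ i ≤ n, the node u^{-1}(i) lies weakly to the right of the node (t^μ)^{-1}(i). Then s ∈ Std^μ(λ), i.e. s is μ-row-dominated. -/

import Mathlib

namespace FS

open scoped Classical

/-- A node `(r, c, m)`: row `r`, column `c`, component `m` (all 1-based). -/
abbrev Node := ℕ × ℕ × ℕ

/-- Membership of a node in the Young diagram of the multipartition `p`,
where `p m r` is the `r`-th part of the `m`-th component. -/
def InDiag (p : ℕ → ℕ → ℕ) (A : Node) : Prop :=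
  1 ≤ A.2.1 ∧ A.2.1 ≤ p A.2.2 A.1

/-- `p` is an `l`-multipartition of `n` (components indexed `1,…,l`, rows indexed `1,…`). -/
def IsMP (l n : ℕ) (p : ℕ → ℕ → ℕ) : Prop :=
  (∀ m r, (m = 0 ∨ l < m ∨ r = 0 ∨ n < r) → p m r = 0) ∧
  (∀ m r, 1 ≤ r → p m (r + 1) ≤ p m r) ∧
  (∑ m ∈ Finset.Icc 1 l, ∑ r ∈ Finset.Icc 1 n, p m r) = n

/-- Total size of an `l`-multicomposition (rows bounded by `n`). -/
def mpSize (l n : ℕ) (p : ℕ → ℕ → ℕ) : ℕ :=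
  ∑ m ∈ Finset.Icc 1 l, ∑ r ∈ Finset.Icc 1 n, p m r

/-- Size of the `m`-th component. -/
def compSize (n : ℕ) (p : ℕ → ℕ → ℕ) (m : ℕ) : ℕ :=
  ∑ r ∈ Finset.Icc 1 n, p m r

/-- Length of column `c` of component `m`, i.e. `(p^(m))'_c`. -/
def colLen (n : ℕ) (p : ℕ → ℕ → ℕ) (m c : ℕ) : ℕ :=
  ((Finset.Icc 1 n).filter fun r => c ≤ p m r).card

/-- Dominance order on `l`-multicompositions: `Dom l N p q` means `p ⊵ q`. -/
def Dom (l N : ℕ) (p q : ℕ → ℕ → ℕ) : Prop :=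
  ∀ m r, 1 ≤ m → m ≤ l →
    (∑ m' ∈ Finset.Icc 1 (m - 1), compSize N q m') + ∑ r' ∈ Finset.Icc 1 r, q m r' ≤
      (∑ m' ∈ Finset.Icc 1 (m - 1), compSize N p m') + ∑ r' ∈ Finset.Icc 1 r, p m r'

/-- `t` is a `p`-tableau: a bijection from the diagram of `p` onto `{1,…,n}`. -/
def IsTab (n : ℕ) (p : ℕ → ℕ → ℕ) (t : Node → ℕ) : Prop :=
  (∀ A, InDiag p A → 1 ≤ t A ∧ t A ≤ n) ∧
  (∀ A B, InDiag p A → InDiag p B → t A = t B → A = B) ∧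
  (∀ i, 1 ≤ i → i ≤ n → ∃ A, InDiag p A ∧ t A = i)

/-- Entries increase from left to right along each row. -/
def RowStrict (p : ℕ → ℕ → ℕ) (t : Node → ℕ) : Prop :=
  ∀ r c m, InDiag p (r, c, m) → InDiag p (r, c + 1, m) → t (r, c, m) < t (r, c + 1, m)

/-- Entries increase down each column. -/
def ColStrict (p : ℕ → ℕ → ℕ) (t : Node → ℕ) : Prop :=
  ∀ r c m, InDiag p (r, c, m) → InDiag p (r + 1, c, m) → t (r, c, m) < t (r + 1, c, m)

/-- A standard tableau is both row-strict and column-strict. -/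
def IsStd (p : ℕ → ℕ → ℕ) (t : Node → ℕ) : Prop := RowStrict p t ∧ ColStrict p t

/-- The tableau `t_λ`, obtained by writing `1,…,n` in order down successive columns
from left to right (components from `l` down to `1`). -/
def colTab (l n : ℕ) (p : ℕ → ℕ → ℕ) : Node → ℕ := fun A =>
  (∑ m' ∈ Finset.Icc (A.2.2 + 1) l, compSize n p m') +
    (∑ c' ∈ Finset.Icc 1 (A.2.1 - 1), colLen n p A.2.2 c') + A.1

/-- The tableau `t^λ`, obtained by writing `1,…,n` in order along successive rows
from top to bottom (components from `1` up to `l`). -/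
def rowTab (n : ℕ) (p : ℕ → ℕ → ℕ) : Node → ℕ := fun A =>
  (∑ m' ∈ Finset.Icc 1 (A.2.2 - 1), compSize n p m') +
    (∑ r' ∈ Finset.Icc 1 (A.1 - 1), p A.2.2 r') + A.2.1

/-- The Coxeter generator `s_i = (i, i+1)` of the symmetric group. -/
def sw (i : ℕ) : Equiv.Perm ℕ := Equiv.swap i (i + 1)

/-- The product `s_{i_1} ⋯ s_{i_k}` corresponding to a word `L = [i_1,…,i_k]`. -/
def wordProd (L : List ℕ) : Equiv.Perm ℕ := (L.map sw).prod

/-- `L` is an expression for `w` in the Coxeter generators `s_1,…,s_{n-1}` of `S_n`. -/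
def IsWord (n : ℕ) (L : List ℕ) (w : Equiv.Perm ℕ) : Prop :=
  (∀ i ∈ L, 1 ≤ i ∧ i + 1 ≤ n) ∧ wordProd L = w

/-- The Coxeter length of `w ∈ S_n`. -/
noncomputable def len (n : ℕ) (w : Equiv.Perm ℕ) : ℕ :=
  sInf {k | ∃ L, IsWord n L w ∧ L.length = k}

/-- `L` is a reduced expression for `w ∈ S_n`. -/
def IsReduced (n : ℕ) (L : List ℕ) (w : Equiv.Perm ℕ) : Prop :=
  IsWord n L w ∧ L.length = len n w

/-- The Bruhat order on `S_n`: `x ≤ w` iff some reduced expression for `w` has an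
expression for `x` as a subsequence. -/
def BruhatLE (n : ℕ) (x w : Equiv.Perm ℕ) : Prop :=
  ∃ L, IsReduced n L w ∧ ∃ L', L'.Sublist L ∧ wordProd L' = x

/-- Strict Bruhat order. -/
def BruhatLT (n : ℕ) (x w : Equiv.Perm ℕ) : Prop := BruhatLE n x w ∧ x ≠ w

/-- The left (weak) order on `S_n`: `x ≤_L w` iff `ℓ(w) = ℓ(w x⁻¹) + ℓ(x)`. -/
def LeftLE (n : ℕ) (x w : Equiv.Perm ℕ) : Prop :=
  len n w = len n (w * x⁻¹) + len n x

/-- `w` is a permutation of `{1,…,n}` (fixing everything else). -/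
def PermOf (n : ℕ) (w : Equiv.Perm ℕ) : Prop := ∀ i, i = 0 ∨ n < i → w i = i

/-- `w` is the permutation sending the base tableau `base` to the tableau `t`
(e.g. `w = w_t` when `base = t_λ`). -/
def IsPermOfTab (n : ℕ) (p : ℕ → ℕ → ℕ) (base t : Node → ℕ) (w : Equiv.Perm ℕ) : Prop :=
  PermOf n w ∧ ∀ A, InDiag p A → w (base A) = t A

/-- `Shape(t↓j)`: the multicomposition whose `(m, r)` entry is the number of nodes in
row `r` of component `m` whose entry under `t` is at most `j`. -/
def shape (n : ℕ) (p : ℕ → ℕ → ℕ) (t : Node → ℕ) (j : ℕ) : ℕ → ℕ → ℕ :=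
  fun m r => ((Finset.Icc 1 n).filter fun c => c ≤ p m r ∧ t (r, c, m) ≤ j).card

/-- `Shape(t↓j)'`: the conjugate multicomposition, whose `(m, c)` entry is the number of
nodes in column `c` of component `l + 1 - m` whose entry under `t` is at most `j`. -/
def shapeConj (l n : ℕ) (p : ℕ → ℕ → ℕ) (t : Node → ℕ) (j : ℕ) : ℕ → ℕ → ℕ :=
  fun m c => ((Finset.Icc 1 n).filter fun r => c ≤ p (l + 1 - m) r ∧ t (r, c, l + 1 - m) ≤ j).card

/-- `A` lies weakly to the left of `B`. -/
def WeaklyLeft (A B : Node) : Prop :=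
  B.2.2 < A.2.2 ∨ (A.2.2 = B.2.2 ∧ A.2.1 ≤ B.2.1)

/-- `A` lies weakly above `B`. -/
def WeaklyAbove (A B : Node) : Prop :=
  A.2.2 < B.2.2 ∨ (A.2.2 = B.2.2 ∧ A.1 ≤ B.1)

/-- `A` lies weakly to the right of `B`. -/
def WeaklyRight (A B : Node) : Prop :=
  A.2.2 < B.2.2 ∨ (A.2.2 = B.2.2 ∧ B.2.1 ≤ A.2.1)

/-- `t` (a `mu`-tableau) is `lam`-column-dominated on `1,…,j`: each `i ≤ j` appears in `t`
at least as far to the left as it does in `t_lam`. -/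
def ColDomOn (l n : ℕ) (lam mu : ℕ → ℕ → ℕ) (t : Node → ℕ) (j : ℕ) : Prop :=
  ∀ i A B, 1 ≤ i → i ≤ j → InDiag mu A → t A = i → InDiag lam B →
    colTab l n lam B = i → WeaklyLeft A B

/-- `t` is weakly `lam`-column-dominated on `1,…,j`: each `i ≤ j` appears in `t` in a
component at least as far to the left as it does in `t_lam`. -/
def WColDomOn (l n : ℕ) (lam mu : ℕ → ℕ → ℕ) (t : Node → ℕ) (j : ℕ) : Prop :=
  ∀ i A B, 1 ≤ i → i ≤ j → InDiag mu A → t A = i → InDiag lam B →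
    colTab l n lam B = i → B.2.2 ≤ A.2.2

/-- `t` (a `mu`-tableau) is `lam`-row-dominated on `1,…,j`: each `i ≤ j` appears in `t`
at least as high as it does in `t^lam`. -/
def RowDomOn (n : ℕ) (lam mu : ℕ → ℕ → ℕ) (t : Node → ℕ) (j : ℕ) : Prop :=
  ∀ i A B, 1 ≤ i → i ≤ j → InDiag mu A → t A = i → InDiag lam B →
    rowTab n lam B = i → WeaklyAbove A B

/-- The multipartition `λ_L(c, m)`: the first `c` columns of component `m`, followed by
components `m+1,…,l`. -/
def leftPart (lam : ℕ → ℕ → ℕ) (c m : ℕ) : ℕ → ℕ → ℕ := fun k r =>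
  if k = 0 then 0 else if k = 1 then min (lam m r) c else lam (m + k - 1) r

/-- The multipartition `λ_R(c, m)`: components `1,…,m-1`, followed by the part of
component `m` after its first `c` columns. -/
def rightPart (lam : ℕ → ℕ → ℕ) (c m : ℕ) : ℕ → ℕ → ℕ := fun k r =>
  if k < m then lam k r else if k = m then lam m r - c else 0

/-- The multipartition `λ_T(r₀, m)`: components `1,…,m-1`, followed by the first `r₀`
rows of component `m`. -/
def topPart (lam : ℕ → ℕ → ℕ) (r₀ m : ℕ) : ℕ → ℕ → ℕ := fun k r =>
  if k < m then lam k r else if k = m then (if r ≤ r₀ then lam m r else 0) else 0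

/-- The multipartition `λ_B(r₀, m)`: the rows of component `m` after row `r₀`, followed
by components `m+1,…,l`. -/
def botPart (lam : ℕ → ℕ → ℕ) (r₀ m : ℕ) : ℕ → ℕ → ℕ := fun k r =>
  if k = 0 ∨ r = 0 then 0 else if k = 1 then lam m (r₀ + r) else lam (m + k - 1) r

/-- The glued tableau `t_L # t_R`: places `1,…,n_L` on the left part as in `t_L`, and
places `n_L + t_R(A)` at the node corresponding to each node `A` of the right part. -/
def glueLR (nL c m : ℕ) (tL tR : Node → ℕ) : Node → ℕ := fun A =>
  if A.2.2 < m then nL + tR A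
  else if A.2.2 = m then
    (if A.2.1 ≤ c then tL (A.1, A.2.1, 1) else nL + tR (A.1, A.2.1 - c, m))
  else tL (A.1, A.2.1, A.2.2 - m + 1)

/-- The tableau `t⁺` obtained from a tableau `t` of `μ_R(1,m)` by increasing all entries
by `k`, adjoining a first column with entries `1,…,k` to component `m`, and adjoining
empty components `m+1,…,l`. -/
def addFirstCol (k m : ℕ) (t : Node → ℕ) : Node → ℕ := fun A =>
  if A.2.2 = m then (if A.2.1 = 1 then A.1 else k + t (A.1, A.2.1 - 1, m))
  else k + t A

/-- The tableau `t⁺` obtained from a tableau `t` of `μ_L(d-1,m)` by adjoining empty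
components `1,…,m-1` and adjoining a column `d` to component `m` with entries
`nk+1,…,nk+k` from top to bottom. -/
def addLastCol (nk m d : ℕ) (t : Node → ℕ) : Node → ℕ := fun A =>
  if A.2.2 = m then (if A.2.1 = d then nk + A.1 else t (A.1, A.2.1, 1))
  else t (A.1, A.2.1, A.2.2 - m + 1)

/-- The `i`-th smallest element of a finite set of naturals (1-based). -/
def nthElt (S : Finset ℕ) (i : ℕ) : ℕ := (S.sort (· ≤ ·)).getD (i - 1) 0

/-- The set `S_B` of entries of `t_λ` lying in the bottom region (component `> m`, or
component `m` in a row `> r₀`). -/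
noncomputable def SB (l n : ℕ) (lam : ℕ → ℕ → ℕ) (r₀ m : ℕ) : Finset ℕ :=
  (Finset.Icc 1 n).filter fun i =>
    ∃ A, InDiag lam A ∧ colTab l n lam A = i ∧ (m < A.2.2 ∨ (A.2.2 = m ∧ r₀ < A.1))

/-- The glued tableau `t #̄ s`: on the bottom region the entries are `lab_B ∘ t` and on
the top region they are `lab_T ∘ s`, where `lab_B`, `lab_T` are the order-preserving
bijections onto `S_B`, `S_T`. -/
def glueBT (S_B S_T : Finset ℕ) (r₀ m : ℕ) (tB tT : Node → ℕ) : Node → ℕ := fun A =>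
  if A.2.2 < m then nthElt S_T (tT A)
  else if A.2.2 = m then
    (if A.1 ≤ r₀ then nthElt S_T (tT A) else nthElt S_B (tB (A.1 - r₀, A.2.1, 1)))
  else nthElt S_B (tB (A.1, A.2.1, A.2.2 - m + 1))

/-- The residue of a node `(r, c, m)` with respect to the multicharge `κ`:
`κ_m + c - r` in `ℤ/eℤ` (with `ZMod 0 = ℤ` encoding `e = ∞`). -/
def resNode (e : ℕ) (κ : ℕ → ZMod e) (A : Node) : ZMod e :=
  κ A.2.2 + (A.2.1 : ZMod e) - (A.1 : ZMod e)

/-!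
The rank matrix `r_w(j, N) = #{a ≤ j | w a ≤ N}` of a permutation can only decrease as `w` goes up
in the Bruhat order, so `r_{w_s} ≤ r_{w_u}`. Suppose `s A = i` is the entry of `t^μ` at a node `B`
in row `r` of component `m`, and `A = (ρ, γ, m₀)` is not weakly above `B`. Cut `t_λ` after column
`γ` of component `m₀` (at the value `j`) and `t^μ` after row `r` of component `m` (at the value
`N`). Since `s` is standard, the `ρ × γ` rectangle ending at `A` gives `ρ γ ≤ r_{w_s}(j, N)`.
Dually, for `a` counted by `r_{w_u}(j, N)`, let `a = t_λ(A')` and let `B'` be the node of `w_u a`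
in `t^μ`: then `A'` is weakly left of column `γ` of component `m₀`, `u(A') = w_u a` puts `A'` weakly
right of `B'`, and `B'` is weakly above row `r` of component `m`. As `m ≤ m₀`, this forces `m₀ = m`
and `B'` into the `r × γ` rectangle of component `m`, so `r_{w_u}(j, N) ≤ r γ < ρ γ`.
-/

open Finset

lemma sw_apply (i x : ℕ) : sw i x = if x = i then i + 1 else if x = i + 1 then i else x := by
  simp [sw, Equiv.swap_apply_def]

lemma sw_inv (i : ℕ) : (sw i)⁻¹ = sw i := Equiv.swap_inv i (i + 1)

lemma sw_mul_sw_mul (i : ℕ) (y : Equiv.Perm ℕ) : sw i * (sw i * y) = y := by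
  rw [← mul_assoc, sw, Equiv.swap_mul_self, one_mul]

lemma inv_sw_mul_apply_left (i : ℕ) (y : Equiv.Perm ℕ) : (sw i * y)⁻¹ i = y⁻¹ (i + 1) := by
  simp [sw_inv, sw_apply]

lemma inv_sw_mul_apply_right (i : ℕ) (y : Equiv.Perm ℕ) : (sw i * y)⁻¹ (i + 1) = y⁻¹ i := by
  simp [sw_inv, sw_apply]

lemma wordProd_cons (i : ℕ) (L : List ℕ) : wordProd (i :: L) = sw i * wordProd L := by
  simp [wordProd]

namespace PermOf

variable {n : ℕ} {y : Equiv.Perm ℕ}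

lemma inv (hy : PermOf n y) : PermOf n y⁻¹ := fun a ha => by
  nth_rewrite 1 [← hy a ha]
  simp

lemma sw_mul {i : ℕ} (hi : 1 ≤ i) (hin : i + 1 ≤ n) (hy : PermOf n y) :
    PermOf n (sw i * y) := fun a ha => by
  rw [Equiv.Perm.mul_apply, hy a ha, sw_apply]
  split_ifs <;> omega

lemma apply_ne_zero (hy : PermOf n y) {a : ℕ} (ha : a ≠ 0) : y a ≠ 0 := fun h =>
  ha (y.injective (h.trans (hy 0 (Or.inl rfl)).symm))

lemma apply_le (hy : PermOf n y) {a : ℕ} (ha : a ≤ n) : y a ≤ n := by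
  by_contra h
  exact absurd (y.injective (hy (y a) (Or.inr (by omega)))) (by omega)

end PermOf

lemma permOf_wordProd {n : ℕ} {L : List ℕ} (h : ∀ i ∈ L, 1 ≤ i ∧ i + 1 ≤ n) :
    PermOf n (wordProd L) := by
  induction L with
  | nil => exact fun _ _ => rfl
  | cons i L ih =>
    rw [wordProd_cons]
    exact (ih fun j hj => h j (by simp [hj])).sw_mul (h i (by simp)).1 (h i (by simp)).2

noncomputable def invCount (n : ℕ) (w : Equiv.Perm ℕ) : ℕ :=
  ((Icc 1 n ×ˢ Icc 1 n).filter fun p => p.1 < p.2 ∧ w p.2 < w p.1).card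

lemma invCount_one (n : ℕ) : invCount n 1 = 0 := by
  rw [invCount, card_eq_zero, filter_eq_empty_iff]
  rintro ⟨a, b⟩ _ ⟨hab, hba⟩
  exact absurd hba (by simpa using hab.le)

lemma invCount_sw_mul_of_lt {n i : ℕ} (hi : 1 ≤ i) (hin : i + 1 ≤ n) {y : Equiv.Perm ℕ}
    (hy : PermOf n y) (hasc : y⁻¹ i < y⁻¹ (i + 1)) :
    invCount n (sw i * y) = invCount n y + 1 := by
  set p := y⁻¹ i
  set q := y⁻¹ (i + 1)
  have hyp : y p = i := y.apply_symm_apply i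
  have hyq : y q = i + 1 := y.apply_symm_apply (i + 1)
  have hp : p ≠ 0 := hy.inv.apply_ne_zero (by omega)
  have hpn : p ≤ n := hy.inv.apply_le (by omega)
  have hqn : q ≤ n := hy.inv.apply_le hin
  -- `s_i` reverses the relative order of the values `i, i+1` and of no other pair
  have hpair : ∀ a b, (sw i * y) b < (sw i * y) a ↔
      (y b < y a ∧ ¬(a = q ∧ b = p)) ∨ (a = p ∧ b = q) := by
    intro a b
    have ha : y a = i ↔ a = p := ⟨fun h => by simp [p, ← h], fun h => h ▸ hyp⟩
    have hb : y b = i + 1 ↔ b = q := ⟨fun h => by simp [q, ← h], fun h => h ▸ hyq⟩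
    have ha' : y a = i + 1 ↔ a = q := ⟨fun h => by simp [q, ← h], fun h => h ▸ hyq⟩
    have hb' : y b = i ↔ b = p := ⟨fun h => by simp [p, ← h], fun h => h ▸ hyp⟩
    simp only [Equiv.Perm.mul_apply, sw_apply]
    split_ifs <;> omega
  have hset : ((Icc 1 n ×ˢ Icc 1 n).filter
      fun z => z.1 < z.2 ∧ (sw i * y) z.2 < (sw i * y) z.1)
      = insert (p, q) ((Icc 1 n ×ˢ Icc 1 n).filter fun z => z.1 < z.2 ∧ y z.2 < y z.1) := by
    ext ⟨a, b⟩
    simp only [mem_filter, mem_insert, mem_product, mem_Icc, Prod.mk.injEq, hpair]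
    constructor
    · rintro ⟨hmem, hab, (⟨hlt, -⟩ | hpq)⟩
      · exact Or.inr ⟨hmem, hab, hlt⟩
      · exact Or.inl hpq
    · rintro (⟨rfl, rfl⟩ | ⟨hmem, hab, hlt⟩)
      · exact ⟨⟨⟨by omega, hpn⟩, by omega, hqn⟩, hasc, Or.inr ⟨rfl, rfl⟩⟩
      · exact ⟨hmem, hab, Or.inl ⟨hlt, by omega⟩⟩
  have hnot : (p, q) ∉ (Icc 1 n ×ˢ Icc 1 n).filter fun z => z.1 < z.2 ∧ y z.2 < y z.1 := by
    simp [hyp, hyq]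
  rw [invCount, invCount, hset, card_insert_of_notMem hnot]

lemma invCount_sw_mul_of_gt {n i : ℕ} (hi : 1 ≤ i) (hin : i + 1 ≤ n) {y : Equiv.Perm ℕ}
    (hy : PermOf n y) (hdesc : y⁻¹ (i + 1) < y⁻¹ i) :
    invCount n y = invCount n (sw i * y) + 1 := by
  have := invCount_sw_mul_of_lt hi hin (hy.sw_mul hi hin)
    (by rwa [inv_sw_mul_apply_left, inv_sw_mul_apply_right])
  rwa [sw_mul_sw_mul] at this

lemma invCount_wordProd_le {n : ℕ} {L : List ℕ} (hL : ∀ i ∈ L, 1 ≤ i ∧ i + 1 ≤ n) :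
    invCount n (wordProd L) ≤ L.length := by
  induction L with
  | nil => simp [wordProd, invCount_one]
  | cons i L ih =>
    have hi := hL i (by simp)
    have hL' : ∀ j ∈ L, 1 ≤ j ∧ j + 1 ≤ n := fun j hj => hL j (by simp [hj])
    have hy := permOf_wordProd hL'
    have := ih hL'
    rw [wordProd_cons, List.length_cons]
    rcases lt_trichotomy ((wordProd L)⁻¹ i) ((wordProd L)⁻¹ (i + 1)) with h | h | h
    · rw [invCount_sw_mul_of_lt hi.1 hi.2 hy h]
      omega
    · exact absurd ((wordProd L)⁻¹.injective h) (by omega)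
    · have := invCount_sw_mul_of_gt hi.1 hi.2 hy h
      omega

lemma exists_descent {n : ℕ} {w : Equiv.Perm ℕ} (hw : PermOf n w) (hne : w ≠ 1) :
    ∃ i, 1 ≤ i ∧ i + 1 ≤ n ∧ w⁻¹ (i + 1) < w⁻¹ i := by
  by_contra! hasc
  have hge : ∀ a ∈ Icc 1 n, a ≤ w⁻¹ a := by
    intro a ha
    rw [mem_Icc] at ha
    induction a with
    | zero => omega
    | succ a ih =>
      rcases Nat.eq_zero_or_pos a with rfl | ha0
      · exact Nat.one_le_iff_ne_zero.mpr (hw.inv.apply_ne_zero one_ne_zero)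
      · have h1 := ih ⟨ha0, by omega⟩
        have h2 := hasc a ha0 ha.2
        have h3 : w⁻¹ a ≠ w⁻¹ (a + 1) := fun h => by
          have := w⁻¹.injective h
          omega
        omega
  -- `w⁻¹` permutes `[1, n]`, so `∑ w⁻¹ a = ∑ a` there, which forces `w⁻¹ a = a`
  have hsum : ∑ a ∈ Icc 1 n, a = ∑ a ∈ Icc 1 n, w⁻¹ a :=
    (Equiv.Perm.sum_comp w⁻¹ (Icc 1 n) id fun a ha => by
      by_contra h
      exact ha (hw.inv a (by simp only [coe_Icc, Set.mem_Icc] at h; omega))).symm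
  have hfix := (sum_eq_sum_iff_of_le hge).mp hsum
  apply hne
  rw [← inv_eq_one]
  ext a
  by_cases ha : a ∈ Icc 1 n
  · simp [← hfix a ha]
  · simp [hw.inv a (by simp only [mem_Icc] at ha; omega)]

lemma exists_word_length_eq_invCount {n : ℕ} {w : Equiv.Perm ℕ} (hw : PermOf n w) :
    ∃ L, IsWord n L w ∧ L.length = invCount n w := by
  induction h : invCount n w using Nat.strong_induction_on generalizing w with
  | _ k ih =>
    by_cases hne : w = 1
    · subst hne
      exact ⟨[], ⟨by simp, rfl⟩, by rw [← h, invCount_one]; rfl⟩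
    obtain ⟨i, hi1, hin, hdesc⟩ := exists_descent hw hne
    have hk := invCount_sw_mul_of_gt hi1 hin hw hdesc
    obtain ⟨L, ⟨hL, hprod⟩, hlen⟩ := ih _ (by omega) (hw.sw_mul hi1 hin) rfl
    refine ⟨i :: L, ⟨?_, ?_⟩, ?_⟩
    · intro j hj
      rcases List.mem_cons.mp hj with rfl | hj
      exacts [⟨hi1, hin⟩, hL j hj]
    · rw [wordProd_cons, hprod, sw_mul_sw_mul]
    · simp only [List.length_cons, hlen]
      omega

lemma len_eq_invCount {n : ℕ} {w : Equiv.Perm ℕ} (hw : PermOf n w) : len n w = invCount n w := by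
  obtain ⟨L, hL, hlen⟩ := exists_word_length_eq_invCount hw
  obtain ⟨L₀, hL₀, hlen₀⟩ := Nat.sInf_mem (⟨_, L, hL, hlen⟩ :
    {k | ∃ L, IsWord n L w ∧ L.length = k}.Nonempty)
  have h1 : len n w ≤ invCount n w := Nat.sInf_le ⟨L, hL, hlen⟩
  have h2 : invCount n w ≤ L₀.length := hL₀.2 ▸ invCount_wordProd_le hL₀.1
  exact le_antisymm h1 (h2.trans_eq hlen₀)

lemma IsReduced.tail {n i : ℕ} {L : List ℕ} {w : Equiv.Perm ℕ} (h : IsReduced n (i :: L) w) :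
    IsReduced n L (wordProd L) ∧ (wordProd L)⁻¹ i < (wordProd L)⁻¹ (i + 1) := by
  obtain ⟨⟨hval, hprod⟩, hlen⟩ := h
  have hi := hval i (by simp)
  have hL : ∀ j ∈ L, 1 ≤ j ∧ j + 1 ≤ n := fun j hj => hval j (by simp [hj])
  have hy := permOf_wordProd hL
  have hw : w = sw i * wordProd L := by rw [← hprod, wordProd_cons]
  have hlenw : invCount n w = L.length + 1 := by
    rw [← len_eq_invCount (hprod ▸ permOf_wordProd hval), ← hlen, List.length_cons]
  have hle := invCount_wordProd_le hL
  rcases lt_trichotomy ((wordProd L)⁻¹ i) ((wordProd L)⁻¹ (i + 1)) with hlt | heq | hgt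
  · rw [hw, invCount_sw_mul_of_lt hi.1 hi.2 hy hlt] at hlenw
    exact ⟨⟨⟨hL, rfl⟩, by rw [len_eq_invCount hy]; omega⟩, hlt⟩
  · exact absurd ((wordProd L)⁻¹.injective heq) (by omega)
  · have := invCount_sw_mul_of_gt hi.1 hi.2 hy hgt
    rw [← hw] at this
    omega

def rankMatrix (w : Equiv.Perm ℕ) (j N : ℕ) : ℕ := ((Icc 1 j).filter fun a => w a ≤ N).card

section RankMatrix

variable {n : ℕ} {y : Equiv.Perm ℕ}

lemma card_filter_apply_eq (hy : PermOf n y) {M : ℕ} (hM : M ≠ 0) (j : ℕ) :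
    ((Icc 1 j).filter fun a => y a = M).card = if y⁻¹ M ≤ j then 1 else 0 := by
  have hne : y⁻¹ M ≠ 0 := hy.inv.apply_ne_zero hM
  have : ((Icc 1 j).filter fun a => y a = M) = (Icc 1 j).filter fun a => a = y⁻¹ M := by
    simp only [Equiv.Perm.eq_inv_iff_eq]
  rw [this, filter_eq']
  by_cases h : y⁻¹ M ≤ j
  · rw [if_pos (mem_Icc.mpr ⟨Nat.one_le_iff_ne_zero.mpr hne, h⟩), if_pos h, card_singleton]
  · rw [if_neg fun hm => h (mem_Icc.mp hm).2, if_neg h, card_empty]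

lemma rankMatrix_eq_add (hy : PermOf n y) {M : ℕ} (hM : M ≠ 0) (j : ℕ) :
    rankMatrix y j M = rankMatrix y j (M - 1) + if y⁻¹ M ≤ j then 1 else 0 := by
  rw [rankMatrix, rankMatrix, ← card_filter_apply_eq hy hM, ← card_union_of_disjoint]
  · congr 1
    ext a
    simp only [mem_filter, mem_union, mem_Icc]
    omega
  · exact disjoint_filter.mpr fun a _ h1 h2 => by omega

lemma rankMatrix_sw_mul_self (hy : PermOf n y) {i : ℕ} (hi : 1 ≤ i) (j : ℕ) :
    rankMatrix (sw i * y) j i = rankMatrix y j (i - 1) + if y⁻¹ (i + 1) ≤ j then 1 else 0 := by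
  rw [rankMatrix, rankMatrix, ← card_filter_apply_eq hy (by omega), ← card_union_of_disjoint]
  · congr 1
    ext a
    simp only [mem_filter, mem_union, mem_Icc, Equiv.Perm.mul_apply, sw_apply]
    split_ifs <;> omega
  · exact disjoint_filter.mpr fun a _ h1 h2 => by omega

lemma rankMatrix_sw_mul_of_ne {i N : ℕ} (hN : N ≠ i) (j : ℕ) :
    rankMatrix (sw i * y) j N = rankMatrix y j N := by
  unfold rankMatrix
  congr 1
  ext a
  simp only [mem_filter, mem_Icc, Equiv.Perm.mul_apply, sw_apply]
  split_ifs <;> omega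

lemma rankMatrix_sw_mul_le (hy : PermOf n y) {i : ℕ} (hi : 1 ≤ i)
    (hasc : y⁻¹ i < y⁻¹ (i + 1)) (j N : ℕ) :
    rankMatrix (sw i * y) j N ≤ rankMatrix y j N := by
  by_cases hN : N = i
  · subst hN
    rw [rankMatrix_sw_mul_self hy hi, rankMatrix_eq_add hy (M := N) (by omega) j]
    split_ifs <;> omega
  · exact (rankMatrix_sw_mul_of_ne hN j).le

lemma rankMatrix_sw_mul_le_sw_mul (hy : PermOf n y) {x : Equiv.Perm ℕ} (hx : PermOf n x)
    {i : ℕ} (hi : 1 ≤ i) (hasc : x⁻¹ i < x⁻¹ (i + 1))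
    (hle : ∀ j N, rankMatrix x j N ≤ rankMatrix y j N) (j N : ℕ) :
    rankMatrix (sw i * x) j N ≤ rankMatrix (sw i * y) j N := by
  by_cases hN : N = i
  swap
  · rw [rankMatrix_sw_mul_of_ne hN, rankMatrix_sw_mul_of_ne hN]
    exact hle j N
  subst hN
  rw [rankMatrix_sw_mul_self hx hi, rankMatrix_sw_mul_self hy hi]
  have hlow := hle j (N - 1)
  have htop := hle j (N + 1)
  rw [rankMatrix_eq_add hx (M := N + 1) (by omega), rankMatrix_eq_add hy (M := N + 1) (by omega),
    Nat.add_sub_cancel, rankMatrix_eq_add hx (M := N) (by omega),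
    rankMatrix_eq_add hy (M := N) (by omega)] at htop
  -- if `x⁻¹ (N+1) ≤ j` then also `x⁻¹ N ≤ j`, and the bound at `N + 1` gives the claim
  split_ifs at htop ⊢ <;> omega

/-- One direction of the rank-matrix criterion for the Bruhat order. -/
lemma BruhatLE.rankMatrix_le {x w : Equiv.Perm ℕ} (h : BruhatLE n x w) (j N : ℕ) :
    rankMatrix w j N ≤ rankMatrix x j N := by
  obtain ⟨L, hred, L', hsub, rfl⟩ := h
  induction L generalizing w L' j N with
  | nil =>
    rw [List.sublist_nil.mp hsub, ← hred.1.2]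
  | cons i L ih =>
    have hi := hred.1.1 i (by simp)
    obtain ⟨hredL, hasc⟩ := hred.tail
    have hy := permOf_wordProd hredL.1.1
    rw [← hred.1.2, wordProd_cons]
    cases hsub with
    | cons _ hsub =>
      exact (rankMatrix_sw_mul_le hy hi.1 hasc j N).trans (ih (hred := hredL) (hsub := hsub) j N)
    | cons_cons _ hsub =>
      rw [wordProd_cons]
      exact rankMatrix_sw_mul_le_sw_mul
        (permOf_wordProd fun k hk => hredL.1.1 k (hsub.subset hk)) hy hi.1 hasc
        (ih (hred := hredL) (hsub := hsub)) j N

end RankMatrix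

lemma sum_Icc_eq_add_sum_Icc (f : ℕ → ℕ) {a b : ℕ} (h : a ≤ b) :
    ∑ k ∈ Icc a b, f k = f a + ∑ k ∈ Icc (a + 1) b, f k := by
  rw [Icc_eq_cons_Ioc h, sum_cons, Icc_add_one_left_eq_Ioc]

lemma sum_Icc_one_eq_sum_add (f : ℕ → ℕ) {r : ℕ} (h : 1 ≤ r) :
    ∑ k ∈ Icc 1 r, f k = ∑ k ∈ Icc 1 (r - 1), f k + f r := by
  obtain ⟨k, rfl⟩ := Nat.exists_eq_add_of_le' h
  rw [sum_Icc_succ_top (by omega), Nat.add_sub_cancel]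

lemma sum_Icc_one_mono (f : ℕ → ℕ) {a b : ℕ} (h : a ≤ b) :
    ∑ k ∈ Icc 1 a, f k ≤ ∑ k ∈ Icc 1 b, f k :=
  sum_le_sum_of_subset (Icc_subset_Icc_right h)

lemma exists_partial_sum_bracket (f : ℕ → ℕ) {v : ℕ} (hv : 1 ≤ v) :
    ∀ L, v ≤ ∑ k ∈ Icc 1 L, f k → ∃ k, 1 ≤ k ∧ k ≤ L ∧
      ∑ k' ∈ Icc 1 (k - 1), f k' < v ∧ v ≤ ∑ k' ∈ Icc 1 k, f k'
  | 0, h => by simp at h; omega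
  | L + 1, h => by
    by_cases hL : v ≤ ∑ k ∈ Icc 1 L, f k
    · obtain ⟨k, hk1, hkL, hk⟩ := exists_partial_sum_bracket f hv L hL
      exact ⟨k, hk1, by omega, hk⟩
    · exact ⟨L + 1, by omega, le_rfl, by simpa using hL, h⟩

namespace IsMP

variable {l n : ℕ} {p : ℕ → ℕ → ℕ}

lemma bounds_of_inDiag (hp : IsMP l n p) {r c m : ℕ} (h : InDiag p (r, c, m)) :
    1 ≤ m ∧ m ≤ l ∧ 1 ≤ r ∧ r ≤ n := by
  have h1 : 1 ≤ c := h.1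
  have h2 : c ≤ p m r := h.2
  by_contra hc
  have := hp.1 m r (by omega)
  omega

lemma part_le (hp : IsMP l n p) (m r : ℕ) : p m r ≤ n := by
  by_cases h : 1 ≤ m ∧ m ≤ l ∧ 1 ≤ r ∧ r ≤ n
  swap
  · rw [hp.1 m r (by omega)]
    exact Nat.zero_le n
  · calc p m r ≤ compSize n p m :=
          single_le_sum (fun _ _ => Nat.zero_le _) (mem_Icc.mpr ⟨by omega, by omega⟩)
      _ ≤ ∑ m' ∈ Icc 1 l, compSize n p m' :=
          single_le_sum (fun _ _ => Nat.zero_le _) (mem_Icc.mpr ⟨by omega, by omega⟩)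
      _ = n := hp.2.2

lemma antitone (hp : IsMP l n p) (m : ℕ) {r₁ r₂ : ℕ} (h1 : 1 ≤ r₁) (h : r₁ ≤ r₂) :
    p m r₂ ≤ p m r₁ := by
  induction r₂, h using Nat.le_induction with
  | base => exact le_rfl
  | succ r₂ h ih => exact (hp.2.1 m r₂ (by omega)).trans ih

lemma inDiag_of_le (hp : IsMP l n p) {r c m r' c' : ℕ} (h : InDiag p (r, c, m))
    (hr₁ : 1 ≤ r') (hr : r' ≤ r) (hc₁ : 1 ≤ c') (hc : c' ≤ c) : InDiag p (r', c', m) :=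
  ⟨hc₁, hc.trans (h.2.trans (hp.antitone m hr₁ hr))⟩

lemma le_colLen (hp : IsMP l n p) {r c m : ℕ} (h : InDiag p (r, c, m)) :
    r ≤ colLen n p m c := by
  have hr := (hp.bounds_of_inDiag h).2.2
  calc r = (Icc 1 r).card := by simp
    _ ≤ colLen n p m c := card_le_card fun a ha => by
      rw [mem_Icc] at ha
      exact mem_filter.mpr
        ⟨mem_Icc.mpr ⟨ha.1, by omega⟩, (hp.inDiag_of_le h ha.1 ha.2 h.1 le_rfl).2⟩

lemma compSize_eq_sum_colLen (hp : IsMP l n p) (m : ℕ) :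
    compSize n p m = ∑ c ∈ Icc 1 n, colLen n p m c := by
  have hrow : ∀ r ∈ Icc 1 n, p m r = ((Icc 1 n).filter fun c => c ≤ p m r).card := by
    intro r _
    have : ((Icc 1 n).filter fun c => c ≤ p m r) = Icc 1 (p m r) := by
      ext c
      simp only [mem_filter, mem_Icc]
      have := hp.part_le m r
      omega
    simp [this]
  rw [compSize, sum_congr rfl hrow]
  simp only [card_filter, colLen]
  exact sum_comm

lemma sum_colLen_le_compSize (hp : IsMP l n p) (m : ℕ) {c : ℕ} (hc : c ≤ n) :
    ∑ c' ∈ Icc 1 c, colLen n p m c' ≤ compSize n p m :=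
  hp.compSize_eq_sum_colLen m ▸ sum_Icc_one_mono _ hc

end IsMP

/-- The entries `≤ colTabEnd l n p c m` of `t_p` fill the components after `m` and the first
`c` columns of component `m`. -/
def colTabEnd (l n : ℕ) (p : ℕ → ℕ → ℕ) (c m : ℕ) : ℕ :=
  (∑ m' ∈ Icc (m + 1) l, compSize n p m') + ∑ c' ∈ Icc 1 c, colLen n p m c'

/-- The entries `≤ rowTabEnd n p r m` of `t^p` fill the components before `m` and the first
`r` rows of component `m`. -/
def rowTabEnd (n : ℕ) (p : ℕ → ℕ → ℕ) (r m : ℕ) : ℕ :=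
  (∑ m' ∈ Icc 1 (m - 1), compSize n p m') + ∑ r' ∈ Icc 1 r, p m r'

section TabEnd

variable {l n : ℕ} {p : ℕ → ℕ → ℕ}

lemma colTab_le_colTabEnd (hp : IsMP l n p) {r c m c₀ : ℕ} (h : InDiag p (r, c, m))
    (hc : c ≤ c₀) : colTab l n p (r, c, m) ≤ colTabEnd l n p c₀ m := by
  have := hp.le_colLen h
  have := sum_Icc_one_eq_sum_add (colLen n p m) (show 1 ≤ c from h.1)
  have := sum_Icc_one_mono (colLen n p m) hc
  simp only [colTab, colTabEnd]
  omega

lemma colTab_lt_colTab (hp : IsMP l n p) {r₁ c₁ r₂ c₂ m : ℕ} (h : InDiag p (r₁, c₁, m))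
    (hr₂ : 1 ≤ r₂) (hc : c₁ < c₂) : colTab l n p (r₁, c₁, m) < colTab l n p (r₂, c₂, m) := by
  have := colTab_le_colTabEnd hp h (Nat.le_sub_one_of_lt hc)
  simp only [colTab, colTabEnd] at this ⊢
  omega

lemma eq_of_colTab_eq (hp : IsMP l n p) {r₁ c₁ r₂ c₂ m : ℕ} (h₁ : InDiag p (r₁, c₁, m))
    (h₂ : InDiag p (r₂, c₂, m)) (heq : colTab l n p (r₁, c₁, m) = colTab l n p (r₂, c₂, m)) :
    r₁ = r₂ ∧ c₁ = c₂ := by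
  have hr₁ := (hp.bounds_of_inDiag h₁).2.2.1
  have hr₂ := (hp.bounds_of_inDiag h₂).2.2.1
  rcases lt_trichotomy c₁ c₂ with hc | rfl | hc
  · exact absurd heq (colTab_lt_colTab hp h₁ hr₂ hc).ne
  · simp only [colTab] at heq
    omega
  · exact absurd heq (colTab_lt_colTab hp h₂ hr₁ hc).ne'

lemma weaklyLeft_of_colTab_le_colTabEnd (hp : IsMP l n p) {A : Node} (hA : InDiag p A)
    {r c m : ℕ} (hm : m ≤ l) (hc : c ≤ n) (h : colTab l n p A ≤ colTabEnd l n p c m) :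
    WeaklyLeft A (r, c, m) := by
  obtain ⟨r', c', m'⟩ := A
  have hb := hp.bounds_of_inDiag hA
  simp only [WeaklyLeft, colTab, colTabEnd] at h ⊢
  by_contra hcon
  rcases Nat.lt_or_ge m' m with hm' | hm'
  · -- `t_p` enters component `m'` only after filling all of component `m`
    have h1 : ∑ k ∈ Icc m l, compSize n p k ≤ ∑ k ∈ Icc (m' + 1) l, compSize n p k :=
      sum_le_sum_of_subset (Icc_subset_Icc_left hm')
    have h2 := sum_Icc_eq_add_sum_Icc (compSize n p) hm
    have h3 := hp.sum_colLen_le_compSize m hc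
    omega
  · obtain rfl : m' = m := by omega
    have := sum_Icc_one_mono (colLen n p m') (show c ≤ c' - 1 by omega)
    omega

lemma rowTab_le_rowTabEnd {r c m : ℕ} (hr : 1 ≤ r) (hc : c ≤ p m r) :
    rowTab n p (r, c, m) ≤ rowTabEnd n p r m := by
  have := sum_Icc_one_eq_sum_add (p m) hr
  simp only [rowTab, rowTabEnd]
  omega

lemma rowTabEnd_le (hp : IsMP l n p) {r m : ℕ} (hm₁ : 1 ≤ m) (hm : m ≤ l) (hr : r ≤ n) :
    rowTabEnd n p r m ≤ n := by
  have h1 : ∑ r' ∈ Icc 1 r, p m r' ≤ compSize n p m := sum_Icc_one_mono _ hr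
  have h2 := sum_Icc_one_eq_sum_add (compSize n p) hm₁
  have h3 : ∑ k ∈ Icc 1 m, compSize n p k ≤ n := (sum_Icc_one_mono _ hm).trans_eq hp.2.2
  rw [rowTabEnd]
  omega

lemma weaklyAbove_of_rowTab_le_rowTabEnd {B : Node} (hB : InDiag p B)
    {r c m : ℕ} (hm₁ : 1 ≤ m) (hr : r ≤ n) (h : rowTab n p B ≤ rowTabEnd n p r m) :
    WeaklyAbove B (r, c, m) := by
  obtain ⟨r', c', m'⟩ := B
  have hc' : 1 ≤ c' := hB.1
  simp only [WeaklyAbove, rowTab, rowTabEnd] at h ⊢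
  by_contra hcon
  rcases Nat.lt_or_ge m m' with hm | hm
  · -- `t^p` enters component `m'` only after filling all of component `m`
    have h1 : ∑ k ∈ Icc 1 m, compSize n p k ≤ ∑ k ∈ Icc 1 (m' - 1), compSize n p k :=
      sum_Icc_one_mono _ (by omega)
    have h2 := sum_Icc_one_eq_sum_add (compSize n p) hm₁
    have h3 : ∑ r' ∈ Icc 1 r, p m r' ≤ compSize n p m := sum_Icc_one_mono _ hr
    omega
  · obtain rfl : m' = m := by omega
    have := sum_Icc_one_mono (p m') (show r ≤ r' - 1 by omega)
    omega

lemma exists_rowTab_eq (hp : IsMP l n p) {v : ℕ} (hv₁ : 1 ≤ v) (hv : v ≤ n) :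
    ∃ B, InDiag p B ∧ rowTab n p B = v := by
  obtain ⟨m, hm₁, -, hm_lt, hm_le⟩ :=
    exists_partial_sum_bracket (compSize n p) hv₁ l (hv.trans_eq hp.2.2.symm)
  have hm := sum_Icc_one_eq_sum_add (compSize n p) hm₁
  set v' := v - ∑ k ∈ Icc 1 (m - 1), compSize n p k
  obtain ⟨r, hr₁, -, hr_lt, hr_le⟩ :=
    exists_partial_sum_bracket (p m) (show 1 ≤ v' by omega) n (show v' ≤ compSize n p m by omega)
  have hr := sum_Icc_one_eq_sum_add (p m) hr₁
  refine ⟨(r, v' - ∑ k ∈ Icc 1 (r - 1), p m k, m), ⟨?_, ?_⟩, ?_⟩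
  · show 1 ≤ v' - ∑ k ∈ Icc 1 (r - 1), p m k
    omega
  · show v' - ∑ k ∈ Icc 1 (r - 1), p m k ≤ p m r
    omega
  · simp only [rowTab]
    omega

end TabEnd

lemma IsStd.le_of_le {l n : ℕ} {p : ℕ → ℕ → ℕ} (hp : IsMP l n p) {s : Node → ℕ}
    (hs : IsStd p s) {r c m r' c' : ℕ} (h : InDiag p (r, c, m)) (hr₁ : 1 ≤ r') (hr : r' ≤ r)
    (hc₁ : 1 ≤ c') (hc : c' ≤ c) : s (r', c', m) ≤ s (r, c, m) := by
  have hrow : ∀ k, c' ≤ k → k ≤ c → s (r', c', m) ≤ s (r', k, m) := by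
    intro k hk
    induction k, hk using Nat.le_induction with
    | base => exact fun _ => le_rfl
    | succ k hk ih =>
      intro hkc
      exact (ih (by omega)).trans (hs.1 r' k m (hp.inDiag_of_le h hr₁ hr (by omega) (by omega))
        (hp.inDiag_of_le h hr₁ hr (by omega) hkc)).le
  have hcol : ∀ k, r' ≤ k → k ≤ r → s (r', c, m) ≤ s (k, c, m) := by
    intro k hk
    induction k, hk using Nat.le_induction with
    | base => exact fun _ => le_rfl
    | succ k hk ih =>
      intro hkr
      exact (ih (by omega)).trans (hs.2 k c m (hp.inDiag_of_le h (by omega) (by omega) h.1 le_rfl)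
        (hp.inDiag_of_le h (by omega) hkr h.1 le_rfl)).le
  exact (hrow c hc le_rfl).trans (hcol r hr le_rfl)

lemma mul_le_rankMatrix {l n : ℕ} {p : ℕ → ℕ → ℕ} (hp : IsMP l n p) {s : Node → ℕ}
    (hs : IsStd p s) {w : Equiv.Perm ℕ} (hw : ∀ A, InDiag p A → w (colTab l n p A) = s A)
    {ρ γ m N : ℕ} (hA : InDiag p (ρ, γ, m)) (hsA : s (ρ, γ, m) ≤ N) :
    ρ * γ ≤ rankMatrix w (colTabEnd l n p γ m) N := by
  have hrect : ∀ rc ∈ Icc 1 ρ ×ˢ Icc 1 γ, InDiag p (rc.1, rc.2, m) := fun rc hrc => by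
    simp only [mem_product, mem_Icc] at hrc
    exact hp.inDiag_of_le hA hrc.1.1 hrc.1.2 hrc.2.1 hrc.2.2
  calc ρ * γ = (Icc 1 ρ ×ˢ Icc 1 γ).card := by simp
    _ ≤ rankMatrix w (colTabEnd l n p γ m) N := by
      refine card_le_card_of_injOn (fun rc => colTab l n p (rc.1, rc.2, m)) ?_ ?_
      · intro rc hrc
        have hrc' := mem_product.mp hrc
        simp only [mem_coe, mem_filter, mem_Icc]
        refine ⟨⟨?_, colTab_le_colTabEnd hp (hrect rc hrc) (mem_Icc.mp hrc'.2).2⟩, ?_⟩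
        · simp only [colTab]
          have := (mem_Icc.mp hrc'.1).1
          omega
        · rw [hw _ (hrect rc hrc)]
          exact (hs.le_of_le hp hA (mem_Icc.mp hrc'.1).1 (mem_Icc.mp hrc'.1).2
            (mem_Icc.mp hrc'.2).1 (mem_Icc.mp hrc'.2).2).trans hsA
      · intro rc₁ h₁ rc₂ h₂ heq
        obtain ⟨hr, hc⟩ := eq_of_colTab_eq hp (hrect rc₁ h₁) (hrect rc₂ h₂) heq
        exact Prod.ext hr hc

section RightDominated

variable {l n : ℕ} {lam mu : ℕ → ℕ → ℕ} {u : Node → ℕ} {w : Equiv.Perm ℕ}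

lemma mem_image_rowTab_of_le_rowTabEnd (hlam : IsMP l n lam) (hmu : IsMP l n mu)
    (hu : IsTab n lam u) (hw : IsPermOfTab n lam (colTab l n lam) u w)
    (hright : ∀ i A B, 1 ≤ i → i ≤ n → InDiag lam A → u A = i → InDiag mu B →
      rowTab n mu B = i → WeaklyRight A B)
    {r m γ m₀ a : ℕ} (hm₁ : 1 ≤ m) (hm : m ≤ m₀) (hm₀ : m₀ ≤ l) (hr : r ≤ n) (hγ : γ ≤ n)
    (ha : a ∈ Icc 1 (colTabEnd l n lam γ m₀)) (hwa : w a ≤ rowTabEnd n mu r m) :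
    m₀ = m ∧ w a ∈ (Icc 1 r ×ˢ Icc 1 γ).image fun rc => rowTab n mu (rc.1, rc.2, m) := by
  rw [mem_Icc] at ha
  have hwa₁ : 1 ≤ w a := Nat.one_le_iff_ne_zero.mpr (hw.1.apply_ne_zero (by omega))
  have hwan : w a ≤ n := hwa.trans (rowTabEnd_le hmu hm₁ (hm.trans hm₀) hr)
  obtain ⟨A, hA, huA⟩ := hu.2.2 (w a) hwa₁ hwan
  have hcolA : colTab l n lam A = a := w.injective ((hw.2 A hA).trans huA)
  obtain ⟨⟨r', c', m'⟩, hB, hrowB⟩ := exists_rowTab_eq hmu hwa₁ hwan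
  have hleft : WeaklyLeft A (1, γ, m₀) :=
    weaklyLeft_of_colTab_le_colTabEnd hlam hA hm₀ hγ (hcolA ▸ ha.2)
  have hAB : WeaklyRight A (r', c', m') := hright _ A _ hwa₁ hwan hA huA hB hrowB
  have habove : WeaklyAbove (r', c', m') (r, 1, m) :=
    weaklyAbove_of_rowTab_le_rowTabEnd hB hm₁ hr (hrowB ▸ hwa)
  have hr' := (hmu.bounds_of_inDiag hB).2.2.1
  have hc' : 1 ≤ c' := hB.1
  simp only [WeaklyLeft, WeaklyRight, WeaklyAbove] at hleft hAB habove
  obtain ⟨rfl, rfl⟩ : m₀ = m ∧ m' = m₀ := by omega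
  refine ⟨rfl, mem_image.mpr ⟨(r', c'), ?_, hrowB⟩⟩
  simp only [mem_product, mem_Icc]
  omega

lemma rankMatrix_le_mul (hlam : IsMP l n lam) (hmu : IsMP l n mu)
    (hu : IsTab n lam u) (hw : IsPermOfTab n lam (colTab l n lam) u w)
    (hright : ∀ i A B, 1 ≤ i → i ≤ n → InDiag lam A → u A = i → InDiag mu B →
      rowTab n mu B = i → WeaklyRight A B)
    {r m γ m₀ : ℕ} (hm₁ : 1 ≤ m) (hm : m ≤ m₀) (hm₀ : m₀ ≤ l) (hr : r ≤ n) (hγ : γ ≤ n) :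
    rankMatrix w (colTabEnd l n lam γ m₀) (rowTabEnd n mu r m) ≤ r * γ :=
  calc rankMatrix w (colTabEnd l n lam γ m₀) (rowTabEnd n mu r m)
      = (((Icc 1 (colTabEnd l n lam γ m₀)).filter
          fun a => w a ≤ rowTabEnd n mu r m).image w).card :=
        (card_image_of_injective _ w.injective).symm
    _ ≤ ((Icc 1 r ×ˢ Icc 1 γ).image fun rc => rowTab n mu (rc.1, rc.2, m)).card := by
      refine card_le_card fun v hv => ?_
      obtain ⟨a, ha, rfl⟩ := mem_image.mp hv
      rw [mem_filter] at ha
      exact (mem_image_rowTab_of_le_rowTabEnd hlam hmu hu hw hright hm₁ hm hm₀ hr hγ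
        ha.1 ha.2).2
    _ ≤ (Icc 1 r ×ˢ Icc 1 γ).card := card_image_le
    _ = r * γ := by simp

end RightDominated

theorem rowDom_of_bruhat_and_right_general (l n : ℕ)
    (lam mu : ℕ → ℕ → ℕ) (hlam : IsMP l n lam) (hmu : IsMP l n mu)
    (s : Node → ℕ) (hsStd : IsStd lam s)
    (u : Node → ℕ) (huTab : IsTab n lam u)
    (ws wu : Equiv.Perm ℕ)
    (hws : IsPermOfTab n lam (colTab l n lam) s ws)
    (hwu : IsPermOfTab n lam (colTab l n lam) u wu)
    (hbru : BruhatLE n wu ws)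
    (hright : ∀ i A B, 1 ≤ i → i ≤ n → InDiag lam A → u A = i → InDiag mu B →
      rowTab n mu B = i → WeaklyRight A B) :
    RowDomOn n mu lam s n := by
  intro i A B _ _ hA hsA hB hrowB
  obtain ⟨ρ, γ, m₀⟩ := A
  obtain ⟨r, c, m⟩ := B
  obtain ⟨hm₁, -, hr₁, hrn⟩ := hmu.bounds_of_inDiag hB
  obtain ⟨-, hm₀, hρ₁, -⟩ := hlam.bounds_of_inDiag hA
  have hγ : γ ≤ n := hA.2.trans (hlam.part_le _ _)
  by_contra hAB
  simp only [WeaklyAbove] at hAB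
  have hm : m ≤ m₀ := by omega
  have hsN : s (ρ, γ, m₀) ≤ rowTabEnd n mu r m := hsA ▸ hrowB ▸ rowTab_le_rowTabEnd hr₁ hB.2
  have hlow : ρ * γ ≤ rankMatrix wu (colTabEnd l n lam γ m₀) (rowTabEnd n mu r m) :=
    (mul_le_rankMatrix hlam hsStd hws.2 hA hsN).trans (hbru.rankMatrix_le _ _)
  obtain ⟨a, ha⟩ := card_pos.mp (lt_of_lt_of_le (Nat.mul_pos hρ₁ hA.1) hlow)
  rw [mem_filter] at ha
  obtain ⟨rfl, -⟩ := mem_image_rowTab_of_le_rowTabEnd hlam hmu huTab hwu hright hm₁ hm hm₀ hrn hγ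
    ha.1 ha.2
  have hup := rankMatrix_le_mul hlam hmu huTab hwu hright hm₁ hm hm₀ hrn hγ (w := wu)
  have := Nat.mul_lt_mul_of_pos_right (show r < ρ by omega) (show 0 < γ from hA.1)
  omega

/-- If `s ∈ Std(λ)`, `u` is a `λ`-tableau with `w_u ≤ w_s` in the
Bruhat order, and every entry of `u` lies weakly to the right of where it lies in `t^μ`,
then `s` is `μ`-row-dominated. -/
theorem rowDom_of_bruhat_and_right (l n : ℕ) (hl : 1 ≤ l) (hn : 1 ≤ n)
    (lam mu : ℕ → ℕ → ℕ) (hlam : IsMP l n lam) (hmu : IsMP l n mu)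
    (s : Node → ℕ) (hsTab : IsTab n lam s) (hsStd : IsStd lam s)
    (u : Node → ℕ) (huTab : IsTab n lam u)
    (ws wu : Equiv.Perm ℕ)
    (hws : IsPermOfTab n lam (colTab l n lam) s ws)
    (hwu : IsPermOfTab n lam (colTab l n lam) u wu)
    (hbru : BruhatLE n wu ws)
    (hright : ∀ i A B, 1 ≤ i → i ≤ n → InDiag lam A → u A = i → InDiag mu B →
      rowTab n mu B = i → WeaklyRight A B) :
    RowDomOn n mu lam s n :=
  rowDom_of_bruhat_and_right_general l n lam mu hlam hmu s hsStd u huTab ws wu hws hwu hbru hright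

end FS
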